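/- arXiv:2302.03123 — 4 statements merged into one kernel-verified Lean document; each statement's English description precedes it below -/
import Mathlib

section
/- Let Q be a divisible commutative quantale, b ∈ Q, and define the smooth slice multiplication x ⊗_b y := b ⊗ (b ⧵ x) ⊗ (b ⧵ y) for x, y ≤ b. Then for all x, y, z ≤ b one has x ⊗_b (y ⊗_b z) = b ⊗ (b ⧵ x) ⊗ (b ⧵ y) ⊗ (b ⧵ z) = (x ⊗_b y) ⊗_b z, and x ⊗_b y = y ⊗_b x; i.e. ⊗_b is associative and commutative on the interval [⊥, b]. -/
/-!
Divisibility gives `b * (b ⧵ a) = a` whenever `a ≤ b`, and `x ⊗_b y ≤ y ≤ b`; hence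
`b * (b ⧵ (x ⊗_b y)) = b * (b ⧵ x) * (b ⧵ y)`, so both bracketings of a triple product collapse
to the symmetric expression `b * (b ⧵ x) * (b ⧵ y) * (b ⧵ z)`.
-/

/-- Residuation in a quantale: `a ⧵ b = sSup {c | a * c ≤ b}`. -/
def res {Q : Type*} [Mul Q] [CompleteLattice Q] (a b : Q) : Q := sSup {c | a * c ≤ b}

/-- The smooth slice multiplication on `[⊥, b]`: `x ⊗_b y = b * (b ⧵ x) * (b ⧵ y)`. -/
def smul {Q : Type*} [Mul Q] [CompleteLattice Q] (b x y : Q) : Q := b * res b x * res b y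

section Semigroup

variable {Q : Type*} [Semigroup Q] [CompleteLattice Q] [IsQuantale Q] {a b c x y : Q}

theorem le_res_iff : c ≤ res a b ↔ a * c ≤ b :=
  Quantale.rightMulResiduation_le_iff_mul_le

theorem mul_res_le : a * res a b ≤ b :=
  le_res_iff.mp le_rfl

theorem mul_res_of_dvd (h : b ∣ a) : b * res b a = a := by
  obtain ⟨c, rfl⟩ := h
  exact le_antisymm mul_res_le (mul_le_mul_right (le_res_iff.mpr le_rfl) b)

theorem smul_le_right (hx : x ≤ b) : smul b x y ≤ y :=
  calc b * res b x * res b y ≤ x * res b y := mul_le_mul_left mul_res_le _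
    _ ≤ b * res b y := mul_le_mul_left hx _
    _ ≤ y := mul_res_le

theorem mul_res_smul (hdiv : ∀ a b : Q, a ≤ b → ∃ c, a = b * c) (hx : x ≤ b) (hy : y ≤ b) :
    b * res b (smul b x y) = b * res b x * res b y :=
  mul_res_of_dvd (hdiv _ _ ((smul_le_right hx).trans hy))

end Semigroup

section CommSemigroup

variable {Q : Type*} [CommSemigroup Q] [CompleteLattice Q] [IsQuantale Q] {b x y z : Q}

theorem smul_smul_right_eq (hdiv : ∀ a b : Q, a ≤ b → ∃ c, a = b * c) (hy : y ≤ b)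
    (hz : z ≤ b) : smul b x (smul b y z) = b * res b x * res b y * res b z := by
  rw [smul, mul_right_comm, mul_res_smul hdiv hy hz]
  ac_rfl

theorem smul_smul_left_eq (hdiv : ∀ a b : Q, a ≤ b → ∃ c, a = b * c) (hx : x ≤ b)
    (hy : y ≤ b) : smul b (smul b x y) z = b * res b x * res b y * res b z := by
  rw [smul, mul_res_smul hdiv hx hy]

end CommSemigroup

/-- In a divisible commutative quantale, the smooth slice multiplication `⊗_b` is
associative and commutative on `[⊥, b]`. -/
theorem smooth_slice_assoc_comm {Q : Type*} [CommSemigroup Q] [CompleteLattice Q] [IsQuantale Q]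
    (hdiv : ∀ a b : Q, a ≤ b → ∃ c, a = b * c)
    {b x y z : Q} (hx : x ≤ b) (hy : y ≤ b) (hz : z ≤ b) :
    smul b x (smul b y z) = b * res b x * res b y * res b z ∧
    smul b x (smul b y z) = smul b (smul b x y) z ∧
    smul b x y = smul b y x :=
  ⟨smul_smul_right_eq hdiv hy hz,
    (smul_smul_right_eq hdiv hy hz).trans (smul_smul_left_eq hdiv hx hy).symm,
    mul_right_comm _ _ _⟩
end

section
/- Let Q be a commutative semicartesian quantale and let e, e', e'' be idempotent elements of Q. Then δ(e, e') := e ⊗ e' defines a Q-set structure on the set of idempotents: (i) e ⊗ e' = e' ⊗ e; (ii) (e ⊗ e') ⊗ (e' ⊗ e'') ≤ e ⊗ e''; (iii) (e ⊗ e) ⊗ (e ⊗ e') = e ⊗ e'. Moreover, e ⊗ e' is idempotent, e ⊗ e' ≤ e, e ⊗ e' ≤ e', and every idempotent f with f ≤ e and f ≤ e' satisfies f ≤ e ⊗ e'; that is, e ⊗ e' is the infimum of {e, e'} in the poset of idempotents of Q. -/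
theorem le_mul_of_isIdempotentElem {Q : Type*} [Mul Q] [Preorder Q] [MulLeftMono Q]
    [MulRightMono Q] {f a b : Q} (hf : IsIdempotentElem f) (ha : f ≤ a) (hb : f ≤ b) :
    f ≤ a * b :=
  calc f = f * f := hf.eq.symm
    _ ≤ a * b := mul_le_mul' ha hb

theorem mul_mul_mul_le_of_isIdempotentElem {Q : Type*} [Semigroup Q] [SemilatticeInf Q]
    [MulLeftMono Q] (hsc : ∀ a b : Q, a * b ≤ a ⊓ b) {a b c : Q} (hb : IsIdempotentElem b) :
    a * b * (b * c) ≤ a * c :=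
  calc a * b * (b * c) = a * (b * c) := by rw [mul_assoc, hb.mul_self_mul]
    _ ≤ a * c := mul_le_mul_right ((hsc b c).trans inf_le_right) a

theorem idempotents_qset_general {Q : Type*} [CommSemigroup Q] [CompleteLattice Q] [IsQuantale Q]
    (hsc : ∀ a b : Q, a * b ≤ a ⊓ b)
    {e e' e'' : Q} (he : e * e = e) (he' : e' * e' = e') :
    e * e' = e' * e ∧
    (e * e') * (e' * e'') ≤ e * e'' ∧
    (e * e) * (e * e') = e * e' ∧
    (e * e') * (e * e') = e * e' ∧
    e * e' ≤ e ∧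
    e * e' ≤ e' ∧
    (∀ f : Q, f * f = f → f ≤ e → f ≤ e' → f ≤ e * e') :=
  ⟨mul_comm e e', mul_mul_mul_le_of_isIdempotentElem hsc he',
    by rw [he, IsIdempotentElem.mul_self_mul he], IsIdempotentElem.mul he he',
    (hsc e e').trans inf_le_left, (hsc e e').trans inf_le_right,
    fun _ hf => le_mul_of_isIdempotentElem hf⟩

/-- In a commutative semicartesian quantale, `δ(e, e') = e * e'` is a Q-set structure
on idempotents, and `e * e'` is the infimum of `{e, e'}` in the poset of idempotents. -/
theorem idempotents_qset {Q : Type*} [CommSemigroup Q] [CompleteLattice Q] [IsQuantale Q]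
    (hsc : ∀ a b : Q, a * b ≤ a ⊓ b)
    {e e' e'' : Q} (he : e * e = e) (he' : e' * e' = e') (he'' : e'' * e'' = e'') :
    e * e' = e' * e ∧
    (e * e') * (e' * e'') ≤ e * e'' ∧
    (e * e) * (e * e') = e * e' ∧
    (e * e') * (e * e') = e * e' ∧
    e * e' ≤ e ∧
    e * e' ≤ e' ∧
    (∀ f : Q, f * f = f → f ≤ e → f ≤ e' → f ≤ e * e') :=
  idempotents_qset_general hsc he he'
end

section
/- Let Q be a commutative semicartesian quantale with idempotent upper approximations: there is a map q ↦ q⁺ such that for every q, q⁺ is idempotent, q = q ⊗ q⁺, and q⁺ ≤ e for every idempotent e with q = q ⊗ e. Define δ : Q × Q → Q by δ(x, y) = x ⊗ y if x ≠ y and δ(x, x) = x⁺. Then δ is a Q-set structure on Q: δ(x,y) = δ(y,x); δ(x,y) ⊗ δ(y,z) ≤ δ(x,z); and δ(x,x) ⊗ δ(x,y) = δ(x,y). -/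
/-!
Symmetry is clear, and `δ(x,x) ⊗ δ(x,y) = δ(x,y)` follows from `q = q ⊗ q⁺` and the
idempotency of `q⁺`. For transitivity through a middle point `y` distinct from `x` and `z`,
semicartesianity gives `(x ⊗ y) ⊗ (y ⊗ z) = (x ⊗ z) ⊗ (y ⊗ y) ≤ x ⊗ z ≤ δ(x,z)`, the last step
because `x ⊗ x ≤ x = x ⊗ x⁺ ≤ x⁺`; if `y` equals `x` or `z`, transitivity is the absorption law.
-/

open Classical in
noncomputable def upperApproxDist {Q : Type*} [Mul Q] (plus : Q → Q) (x y : Q) : Q :=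
  if x = y then plus x else x * y

section

variable {Q : Type*} [CommSemigroup Q] {plus : Q → Q}

theorem upperApproxDist_self (x : Q) : upperApproxDist plus x x = plus x := if_pos rfl

theorem upperApproxDist_of_ne {x y : Q} (h : x ≠ y) : upperApproxDist plus x y = x * y :=
  if_neg h

variable (plus) in
theorem upperApproxDist_comm (x y : Q) : upperApproxDist plus x y = upperApproxDist plus y x := by
  by_cases h : x = y
  · rw [h]
  · rw [upperApproxDist_of_ne h, upperApproxDist_of_ne (Ne.symm h), mul_comm]

theorem upperApproxDist_self_mul (hidem : ∀ q : Q, plus q * plus q = plus q)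
    (happrox : ∀ q : Q, q = q * plus q) (x y : Q) :
    upperApproxDist plus x x * upperApproxDist plus x y = upperApproxDist plus x y := by
  rw [upperApproxDist_self]
  by_cases h : x = y
  · rw [← h, upperApproxDist_self, hidem]
  · rw [upperApproxDist_of_ne h, ← mul_assoc, mul_comm (plus x) x, ← happrox]

variable [SemilatticeInf Q]

theorem mul_mul_mul_le_of_semicartesian (hsc : ∀ a b : Q, a * b ≤ a ⊓ b) (x y z : Q) :
    x * y * (y * z) ≤ x * z :=
  calc x * y * (y * z) = x * z * (y * y) := by ac_rfl
    _ ≤ x * z := (hsc _ _).trans inf_le_left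

theorem le_plus_of_semicartesian (hsc : ∀ a b : Q, a * b ≤ a ⊓ b)
    (happrox : ∀ q : Q, q = q * plus q) (x : Q) : x ≤ plus x :=
  (happrox x).le.trans ((hsc _ _).trans inf_le_right)

theorem mul_le_upperApproxDist (hsc : ∀ a b : Q, a * b ≤ a ⊓ b)
    (happrox : ∀ q : Q, q = q * plus q) (x y : Q) : x * y ≤ upperApproxDist plus x y := by
  by_cases h : x = y
  · subst h
    rw [upperApproxDist_self]
    exact ((hsc x x).trans inf_le_left).trans (le_plus_of_semicartesian hsc happrox x)
  · rw [upperApproxDist_of_ne h]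

theorem upperApproxDist_mul_le (hsc : ∀ a b : Q, a * b ≤ a ⊓ b)
    (hidem : ∀ q : Q, plus q * plus q = plus q) (happrox : ∀ q : Q, q = q * plus q)
    (x y z : Q) :
    upperApproxDist plus x y * upperApproxDist plus y z ≤ upperApproxDist plus x z := by
  by_cases hxy : x = y
  · subst hxy
    exact (upperApproxDist_self_mul hidem happrox x z).le
  by_cases hyz : y = z
  · subst hyz
    rw [mul_comm, upperApproxDist_comm plus x y, upperApproxDist_self_mul hidem happrox]
  rw [upperApproxDist_of_ne hxy, upperApproxDist_of_ne hyz]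
  exact (mul_mul_mul_le_of_semicartesian hsc x y z).trans (mul_le_upperApproxDist hsc happrox x z)

end

open Classical in
theorem upper_approx_qset_general {Q : Type*} [CommSemigroup Q] [CompleteLattice Q]
    (hsc : ∀ a b : Q, a * b ≤ a ⊓ b)
    (plus : Q → Q)
    (hidem : ∀ q : Q, plus q * plus q = plus q)
    (happrox : ∀ q : Q, q = q * plus q)
    (δ : Q → Q → Q)
    (hδ : ∀ x y : Q, δ x y = if x = y then plus x else x * y) :
    (∀ x y : Q, δ x y = δ y x) ∧
    (∀ x y z : Q, δ x y * δ y z ≤ δ x z) ∧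
    (∀ x y : Q, δ x x * δ x y = δ x y) := by
  obtain rfl : δ = upperApproxDist plus := funext fun x => funext (hδ x)
  exact ⟨upperApproxDist_comm plus, upperApproxDist_mul_le hsc hidem happrox,
    upperApproxDist_self_mul hidem happrox⟩

open Classical in
/-- In a commutative semicartesian quantale with idempotent upper approximations
`q ↦ q⁺`, the map `δ(x, y) = x * y` for `x ≠ y`, `δ(x, x) = x⁺` is a Q-set structure
on `Q` itself. -/
theorem upper_approx_qset {Q : Type*} [CommSemigroup Q] [CompleteLattice Q] [IsQuantale Q]
    (hsc : ∀ a b : Q, a * b ≤ a ⊓ b)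
    (plus : Q → Q)
    (hidem : ∀ q : Q, plus q * plus q = plus q)
    (happrox : ∀ q : Q, q = q * plus q)
    (hleast : ∀ q e : Q, e * e = e → q = q * e → plus q ≤ e)
    (δ : Q → Q → Q)
    (hδ : ∀ x y : Q, δ x y = if x = y then plus x else x * y) :
    (∀ x y : Q, δ x y = δ y x) ∧
    (∀ x y z : Q, δ x y * δ y z ≤ δ x z) ∧
    (∀ x y : Q, δ x x * δ x y = δ x y) :=
  upper_approx_qset_general hsc plus hidem happrox δ hδ
end

section
/- Let Q be an integral commutative quantale and let (X, δ) be a Q-set, writing Ex := δ(x, x). Then the map (x, y) ↦ (δ(x, y), Ex ⊗ Ey) is a functional morphism from the Q-set X ⊠ X (underlying set X × X with distance δ_{X⊠X}((x,y),(x',y')) := δ(x,x') ⊗ δ(y,y')) to the Q-set Q_E (underlying set Q × E(Q) with distance δ_{Q_E}((p,e),(q,a)) := a ⊗ e ⊗ ((p ⧵ q) ⊓ (q ⧵ p))). Concretely: (i) for all x, y, x', y' ∈ X, δ(x,x') ⊗ δ(y,y') ≤ (Ex ⊗ Ey) ⊗ (Ex' ⊗ Ey') ⊗ ((δ(x,y)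 ⧵ δ(x',y')) ⊓ (δ(x',y') ⧵ δ(x,y))); and (ii) Ex ⊗ Ey = δ_{Q_E}((δ(x,y), Ex ⊗ Ey), (δ(x,y), Ex ⊗ Ey)). -/
theorem le_res_of_mul_le {Q : Type*} [Mul Q] [CompleteLattice Q] {a b c : Q}
    (h : a * c ≤ b) : c ≤ res a b :=
  le_sSup h

theorem res_self_eq_top {Q : Type*} [CommSemigroup Q] [CompleteLattice Q]
    (hint : ∀ a : Q, ⊤ * a = a) (a : Q) : res a a = ⊤ :=
  top_unique <| le_res_of_mul_le (by rw [mul_comm, hint])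

/-- The axioms of a `Q`-set `(X, δ)`; `δ x x` is the extent of `x`. -/
structure IsQSet {Q X : Type*} [Mul Q] [LE Q] (δ : X → X → Q) : Prop where
  symm : ∀ x y, δ x y = δ y x
  mul_le : ∀ x y z, δ x y * δ y z ≤ δ x z
  extent_mul : ∀ x y, δ x x * δ x y = δ x y

namespace IsQSet

variable {Q X : Type*} {δ : X → X → Q}

section CommSemigroup

variable [CommSemigroup Q] [LE Q]

theorem extent_mul' (hδ : IsQSet δ) (x y : X) : δ y y * δ x y = δ x y := by
  rw [hδ.symm x y, hδ.extent_mul]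

theorem extents_mul_mul (hδ : IsQSet δ) (x y x' y' : X) :
    (δ x x * δ y y) * (δ x' x' * δ y' y') * (δ x x' * δ y y') = δ x x' * δ y y' :=
  calc (δ x x * δ y y) * (δ x' x' * δ y' y') * (δ x x' * δ y y')
      = (δ x x * (δ x' x' * δ x x')) * (δ y y * (δ y' y' * δ y y')) := by ac_rfl
    _ = δ x x' * δ y y' := by
      rw [hδ.extent_mul' x x', hδ.extent_mul, hδ.extent_mul' y y', hδ.extent_mul]

end CommSemigroup

variable [CommSemigroup Q] [CompleteLattice Q] [IsQuantale Q]

theorem mul_le_res (hδ : IsQSet δ) (x y x' y' : X) :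
    δ x x' * δ y y' ≤ res (δ x y) (δ x' y') :=
  le_res_of_mul_le <|
    calc δ x y * (δ x x' * δ y y') = (δ x' x * δ x y) * δ y y' := by
          rw [hδ.symm x' x]; ac_rfl
      _ ≤ δ x' y * δ y y' := by gcongr; exact hδ.mul_le _ _ _
      _ ≤ δ x' y' := hδ.mul_le _ _ _

theorem mul_le_res_inf_res (hδ : IsQSet δ) (x y x' y' : X) :
    δ x x' * δ y y' ≤ res (δ x y) (δ x' y') ⊓ res (δ x' y') (δ x y) :=
  le_inf (hδ.mul_le_res x y x' y') <| by
    rw [hδ.symm x x', hδ.symm y y']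
    exact hδ.mul_le_res x' y' x y

end IsQSet

/-- For an integral commutative quantale `Q` and a Q-set `(X, δ)` with extent
`Ex = δ(x, x)`, the map `(x, y) ↦ (δ(x, y), Ex * Ey)` is a functional morphism
from `X ⊠ X` to `Q_E`. -/
theorem delta_functional_morphism {Q : Type*} [CommSemigroup Q] [CompleteLattice Q]
    [IsQuantale Q]
    (hint : ∀ a : Q, ⊤ * a = a)
    {X : Type*} (δ : X → X → Q)
    (hsym : ∀ x y : X, δ x y = δ y x)
    (htri : ∀ x y z : X, δ x y * δ y z ≤ δ x z)
    (hext : ∀ x y : X, δ x x * δ x y = δ x y) :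
    (∀ x y x' y' : X,
      δ x x' * δ y y' ≤
        (δ x x * δ y y) * (δ x' x' * δ y' y') *
          (res (δ x y) (δ x' y') ⊓ res (δ x' y') (δ x y))) ∧
    (∀ x y : X,
      δ x x * δ y y =
        (δ x x * δ y y) * (δ x x * δ y y) *
          (res (δ x y) (δ x y) ⊓ res (δ x y) (δ x y))) := by
  have hδ : IsQSet δ := ⟨hsym, htri, hext⟩
  refine ⟨fun x y x' y' => ?_, fun x y => ?_⟩
  · calc δ x x' * δ y y'
        = (δ x x * δ y y) * (δ x' x' * δ y' y') * (δ x x' * δ y y') :=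
          (hδ.extents_mul_mul x y x' y').symm
      _ ≤ _ := by gcongr; exact hδ.mul_le_res_inf_res x y x' y'
  · rw [res_self_eq_top hint, inf_idem, mul_comm _ ⊤, hint, mul_mul_mul_comm,
      hδ.extent_mul x x, hδ.extent_mul y y]
end
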